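/- Every strongly summable ultrafilter is additively isomorphic to one with disjoint binary support: if p is a strongly summable ultrafilter on ℕ, then there is a sequence x with sufficient growth and FS(x) ∈ p such that for any map φ : ℕ → ℕ satisfying φ(∑_{i∈F} x_i) = ∑_{i∈F} 2^i for every nonempty finite F ⊆ ℕ, the pushforward ultrafilter p' = φ(p) is a strongly summable ultrafilter with disjoint binary support. -/

import Mathlib

/-- `FS(x)`: the set of all finite sums `∑_{i∈s} x i` over nonempty finite `s ⊆ ℕ`. -/
def FS (x : ℕ → ℕ) : Set ℕ := {n | ∃ s : Finset ℕ, s.Nonempty ∧ ∑ i ∈ s, x i = n}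

/-- `x` has sufficient growth: `x n > 4·∑_{i<n} x i` for every `n`. -/
def SufficientGrowth (x : ℕ → ℕ) : Prop :=
  ∀ n, 4 * ∑ i ∈ Finset.range n, x i < x n

/-- `p` is strongly summable. -/
def StronglySummable (p : Ultrafilter ℕ) : Prop :=
  ∀ A ∈ p, ∃ x : ℕ → ℕ, (∀ n, 0 < x n) ∧ FS x ⊆ A ∧ FS x ∈ p

/-- The binary support of `n`. -/
def bsupp (n : ℕ) : Set ℕ := {i | (n / 2 ^ i) % 2 = 1}

/-- A sequence `x` has disjoint binary support. -/
def DisjointBinarySupport (x : ℕ → ℕ) : Prop :=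
  ∀ i j, i ≠ j → Disjoint (bsupp (x i)) (bsupp (x j))

/-- An ultrafilter has disjoint binary support. -/
def HasDisjointBinarySupport (p : Ultrafilter ℕ) : Prop :=
  ∃ x : ℕ → ℕ, (∀ n, 0 < x n) ∧ SufficientGrowth x ∧
    DisjointBinarySupport x ∧ FS x ∈ p


/-!
A witness `w` of strong summability for one of the classes `{n | ⌊log₂ n⌋ ≡ r mod 4}` has pairwise
distinct binary lengths (two terms of equal length would sum to a number of the next length), so,
sorted, it gains at least four binary digits per term, which is sufficient growth. Against a
sufficiently growing `x`, expansions `∑ cᵢ xᵢ` with digits `cᵢ ≤ 4` are unique, so any `y` with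
`FS y ⊆ FS x` consists of sums of `x` over pairwise disjoint blocks `H n`, and `φ` maps `FS y` onto
`FS z` for `z n = ∑_{i ∈ H n} 2ⁱ`, which has disjoint binary support. Taking `FS y ⊆ φ⁻¹ A ∩ FS x`
shows that `φ(p)` is strongly summable; taking `A` a class of `φ(p)` and sorting `z` gives the
disjoint-support witness.
-/

open Finset Function

theorem apply_mem_FS (x : ℕ → ℕ) (n : ℕ) : x n ∈ FS x :=
  ⟨{n}, singleton_nonempty n, sum_singleton _ _⟩

theorem add_mem_FS (x : ℕ → ℕ) {i j : ℕ} (h : i ≠ j) : x i + x j ∈ FS x :=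
  ⟨{i, j}, insert_nonempty _ _, sum_pair h⟩

theorem FS_comp_equiv (x : ℕ → ℕ) (σ : ℕ ≃ ℕ) : FS (x ∘ σ) = FS x := by
  ext n
  constructor
  · rintro ⟨s, hs, rfl⟩
    exact ⟨s.map σ.toEmbedding, hs.map, by simp⟩
  · rintro ⟨s, hs, rfl⟩
    exact ⟨s.map σ.symm.toEmbedding, hs.map, by simp⟩

theorem image_FS_eq {x y φ : ℕ → ℕ}
    (h : ∀ s : Finset ℕ, s.Nonempty → φ (∑ i ∈ s, x i) = ∑ i ∈ s, y i) :
    φ '' FS x = FS y := by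
  ext n
  constructor
  · rintro ⟨_, ⟨s, hs, rfl⟩, rfl⟩
    exact ⟨s, hs, (h s hs).symm⟩
  · rintro ⟨s, hs, rfl⟩
    exact ⟨_, ⟨s, hs, rfl⟩, h s hs⟩

theorem bsupp_sum_two_pow (s : Finset ℕ) : bsupp (∑ i ∈ s, 2 ^ i) = s := by
  ext i
  rw [mem_coe, ← toFinset_bitIndices_sum_two_pow s, List.mem_toFinset, Nat.mem_bitIndices,
    Nat.testBit_eq_decide_div_mod_eq, decide_eq_true_iff, toFinset_bitIndices_sum_two_pow]
  rfl

namespace SufficientGrowth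

variable {x : ℕ → ℕ}

theorem eq_of_sum_mul_eq (hx : SufficientGrowth x) {c d : ℕ → ℕ} (hc : ∀ i, c i ≤ 4)
    (hd : ∀ i, d i ≤ 4) (N : ℕ) (h : ∑ i ∈ range N, c i * x i = ∑ i ∈ range N, d i * x i) :
    ∀ i < N, c i = d i := by
  have sum_lt : ∀ e : ℕ → ℕ, (∀ i, e i ≤ 4) → ∀ N, ∑ i ∈ range N, e i * x i < x N :=
    fun e he N => calc
      ∑ i ∈ range N, e i * x i ≤ ∑ i ∈ range N, 4 * x i :=
        sum_le_sum fun i _ => Nat.mul_le_mul_right _ (he i)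
      _ = 4 * ∑ i ∈ range N, x i := (mul_sum _ _ _).symm
      _ < x N := hx N
  induction N with
  | zero => simp
  | succ N ih =>
    rw [sum_range_succ, sum_range_succ] at h
    have digit : ∀ a S, S < x N → (S + a * x N) / x N = a := fun a S hS => by
      rw [Nat.add_mul_div_right _ _ (by omega), Nat.div_eq_of_lt hS, zero_add]
    have hN : c N = d N := by
      rw [← digit (c N) _ (sum_lt c hc N), h, digit _ _ (sum_lt d hd N)]
    rw [hN] at h
    intro i hi
    rcases Nat.lt_succ_iff_lt_or_eq.mp hi with hi | rfl
    · exact ih (Nat.add_right_cancel h) i hi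
    · exact hN

theorem disjoint_of_sum_add_sum_eq (hx : SufficientGrowth x) {F G K : Finset ℕ}
    (h : ∑ i ∈ F, x i + ∑ i ∈ G, x i = ∑ i ∈ K, x i) : Disjoint F G := by
  classical
  obtain ⟨N, hN⟩ := exists_nat_subset_range (F ∪ G ∪ K)
  have hF : F ⊆ range N := fun i hi => hN (by simp [hi])
  have hG : G ⊆ range N := fun i hi => hN (by simp [hi])
  have hK : K ⊆ range N := fun i hi => hN (by simp [hi])
  let δ (s : Finset ℕ) (i : ℕ) : ℕ := if i ∈ s then 1 else 0
  have hδ : ∀ s i, δ s i ≤ 1 := fun s i => by simp only [δ]; split_ifs <;> omega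
  have sum_eq : ∀ s ⊆ range N, ∑ i ∈ s, x i = ∑ i ∈ range N, δ s i * x i := fun s hs => by
    simp only [δ, ite_mul, one_mul, zero_mul]
    rw [sum_ite_mem, inter_eq_right.mpr hs]
  have digits := hx.eq_of_sum_mul_eq (c := fun i => δ F i + δ G i) (d := δ K)
    (fun i => by have := hδ F i; have := hδ G i; omega) (fun i => (hδ K i).trans (by norm_num))
    N (by simpa only [add_mul, sum_add_distrib, ← sum_eq F hF, ← sum_eq G hG, ← sum_eq K hK])
  refine disjoint_left.mpr fun i hiF hiG => ?_
  have h₂ : δ F i + δ G i = 2 := by simp [δ, hiF, hiG]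
  have := digits i (mem_range.mp (hF hiF))
  have := hδ K i
  omega

theorem exists_pairwise_disjoint_of_FS_subset (hx : SufficientGrowth x) {y : ℕ → ℕ}
    (hy : FS y ⊆ FS x) :
    ∃ H : ℕ → Finset ℕ, (∀ n, (H n).Nonempty) ∧ Pairwise (Disjoint on H) ∧
      ∀ n, ∑ i ∈ H n, x i = y n := by
  choose H hne hsum using fun n => hy (apply_mem_FS y n)
  refine ⟨H, hne, fun i j hij => ?_, hsum⟩
  obtain ⟨K, -, hK⟩ := hy (add_mem_FS y hij)
  exact hx.disjoint_of_sum_add_sum_eq (K := K) (by rw [hsum i, hsum j, hK])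

end SufficientGrowth

theorem sufficientGrowth_of_five_mul_le {x : ℕ → ℕ} (h0 : 0 < x 0)
    (h : ∀ n, 5 * x n ≤ x (n + 1)) : SufficientGrowth x := by
  intro n
  induction n with
  | zero => simpa using h0
  | succ n ih =>
    rw [sum_range_succ]
    have := h n
    omega

theorem Nat.log_two_add_of_log_eq {a b : ℕ} (ha : a ≠ 0) (hb : b ≠ 0)
    (h : Nat.log 2 a = Nat.log 2 b) : Nat.log 2 (a + b) = Nat.log 2 a + 1 := by
  have ha₁ := Nat.pow_log_le_self 2 ha
  have ha₂ := Nat.lt_pow_succ_log_self one_lt_two a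
  have hb₁ := Nat.pow_log_le_self 2 hb
  have hb₂ := Nat.lt_pow_succ_log_self one_lt_two b
  rw [← h] at hb₁ hb₂
  apply Nat.log_eq_of_pow_le_of_lt_pow <;> rw [pow_succ] at * <;> omega

theorem Nat.five_mul_le_of_log_two_add_four_le {a b : ℕ}
    (h : Nat.log 2 a + 4 ≤ Nat.log 2 b) : 5 * a ≤ b := by
  have hb : b ≠ 0 := by rintro rfl; simp at h
  have ha₂ := Nat.lt_pow_succ_log_self one_lt_two a
  have hb₁ := (Nat.pow_le_pow_right two_pos h).trans (Nat.pow_log_le_self 2 hb)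
  rw [pow_add, pow_succ] at *
  omega

theorem exists_equiv_strictMono_comp {w : ℕ → ℕ} (hw : Injective w) :
    ∃ σ : ℕ ≃ ℕ, StrictMono (w ∘ σ) := by
  have : Infinite (Set.range w) := (Set.infinite_range_of_injective hw).to_subtype
  refine ⟨(Nat.Subtype.orderIsoOfNat _).toEquiv.trans (Equiv.ofInjective w hw).symm,
    fun m n hmn => ?_⟩
  simp only [comp_apply, Equiv.trans_apply, Equiv.apply_ofInjective_symm]
  exact (Nat.Subtype.orderIsoOfNat _).strictMono hmn

def logClass (r : ℕ) : Set ℕ := {n | Nat.log 2 n % 4 = r}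

theorem Ultrafilter.exists_logClass_mem (p : Ultrafilter ℕ) : ∃ r, logClass r ∈ p := by
  have : ⋃ r ∈ Set.Iio 4, logClass r ∈ p := Filter.mem_of_superset Filter.univ_mem
    fun n _ => Set.mem_biUnion (Set.mem_Iio.mpr (Nat.mod_lt _ four_pos)) rfl
  obtain ⟨r, -, hr⟩ := (Ultrafilter.finite_biUnion_mem_iff (Set.finite_Iio 4)).mp this
  exact ⟨r, hr⟩

theorem exists_equiv_sufficientGrowth_comp {w : ℕ → ℕ} {r : ℕ} (hw : ∀ n, 0 < w n)
    (hFS : FS w ⊆ logClass r) : ∃ σ : ℕ ≃ ℕ, SufficientGrowth (w ∘ σ) := by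
  have hlog : ∀ i j, i ≠ j → Nat.log 2 (w i) ≠ Nat.log 2 (w j) := fun i j hij heq => by
    have h₁ : _ = r := hFS (add_mem_FS w hij)
    have h₂ : _ = r := hFS (apply_mem_FS w i)
    rw [Nat.log_two_add_of_log_eq (hw i).ne' (hw j).ne' heq] at h₁
    omega
  obtain ⟨σ, hσ⟩ := exists_equiv_strictMono_comp fun i j h =>
    by_contra fun hij => hlog i j hij (congrArg _ h)
  refine ⟨σ, sufficientGrowth_of_five_mul_le (hw _)
    fun n => Nat.five_mul_le_of_log_two_add_four_le ?_⟩
  have hle := Nat.log_mono_right (b := 2) (hσ n.lt_add_one).le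
  have hne := hlog _ _ (σ.injective.ne n.lt_add_one.ne)
  have h₁ : _ = r := hFS (apply_mem_FS w (σ n))
  have h₂ : _ = r := hFS (apply_mem_FS w (σ (n + 1)))
  simp only [comp_apply] at hle ⊢
  omega

theorem StronglySummable.exists_sufficientGrowth {p : Ultrafilter ℕ} (hp : StronglySummable p) :
    ∃ x, SufficientGrowth x ∧ FS x ∈ p := by
  obtain ⟨r, hr⟩ := p.exists_logClass_mem
  obtain ⟨w, hw, hwr, hwp⟩ := hp _ hr
  obtain ⟨σ, hσ⟩ := exists_equiv_sufficientGrowth_comp hw hwr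
  exact ⟨w ∘ σ, hσ, by rwa [FS_comp_equiv]⟩

theorem StronglySummable.exists_disjointBinarySupport_FS_subset_of_mem_map
    {p : Ultrafilter ℕ} (hp : StronglySummable p) {x φ : ℕ → ℕ} (hx : SufficientGrowth x)
    (hxp : FS x ∈ p) (hφ : ∀ F : Finset ℕ, F.Nonempty → φ (∑ i ∈ F, x i) = ∑ i ∈ F, 2 ^ i)
    {A : Set ℕ} (hA : A ∈ p.map φ) :
    ∃ z : ℕ → ℕ, (∀ n, 0 < z n) ∧ DisjointBinarySupport z ∧ FS z ⊆ A ∧ FS z ∈ p.map φ := by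
  obtain ⟨y, -, hyA, hyp⟩ := hp _ (Filter.inter_mem (Ultrafilter.mem_map.mp hA) hxp)
  obtain ⟨H, hne, hdisj, hsum⟩ :=
    hx.exists_pairwise_disjoint_of_FS_subset (hyA.trans Set.inter_subset_right)
  have hFS : φ '' FS y = FS fun n => ∑ i ∈ H n, 2 ^ i := image_FS_eq fun s hs => by
    rw [← sum_congr rfl fun n _ => hsum n, ← sum_biUnion (hdisj.set_pairwise _),
      hφ _ (hs.biUnion fun n _ => hne n), sum_biUnion (hdisj.set_pairwise _)]
  refine ⟨_, fun n => sum_pos (fun i _ => Nat.two_pow_pos i) (hne n), fun i j hij => ?_, ?_, ?_⟩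
  · rw [bsupp_sum_two_pow, bsupp_sum_two_pow]
    exact disjoint_coe.mpr (hdisj hij)
  · rw [← hFS]
    exact (Set.image_mono (hyA.trans Set.inter_subset_left)).trans (Set.image_preimage_subset φ A)
  · rw [Ultrafilter.mem_map, ← hFS]
    exact Filter.mem_of_superset hyp (Set.subset_preimage_image φ _)

/-- Every strongly summable ultrafilter is additively isomorphic to one with disjoint
binary support. -/
theorem stronglySummable_add_iso_disjoint_bsupp (p : Ultrafilter ℕ)
    (hp : StronglySummable p) :
    ∃ x : ℕ → ℕ, SufficientGrowth x ∧ FS x ∈ p ∧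
      ∀ φ : ℕ → ℕ,
        (∀ F : Finset ℕ, F.Nonempty → φ (∑ i ∈ F, x i) = ∑ i ∈ F, 2 ^ i) →
        StronglySummable (p.map φ) ∧ HasDisjointBinarySupport (p.map φ) := by
  obtain ⟨x, hx, hxp⟩ := hp.exists_sufficientGrowth
  refine ⟨x, hx, hxp, fun φ hφ => ?_⟩
  have transfer := fun A (hA : A ∈ p.map φ) =>
    hp.exists_disjointBinarySupport_FS_subset_of_mem_map hx hxp hφ hA
  have hpφ : StronglySummable (p.map φ) := fun A hA =>
    (transfer A hA).imp fun _ ⟨hz, _, hzA, hzp⟩ => ⟨hz, hzA, hzp⟩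
  obtain ⟨r, hr⟩ := (p.map φ).exists_logClass_mem
  obtain ⟨z, hz, hzd, hzr, hzp⟩ := transfer _ hr
  obtain ⟨σ, hσ⟩ := exists_equiv_sufficientGrowth_comp hz hzr
  exact ⟨hpφ, z ∘ σ, fun n => hz _, hσ, fun i j hij => hzd _ _ (σ.injective.ne hij),
    by rwa [FS_comp_equiv]⟩
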